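/- (Lemma 1 of the paper.) Suppose (ψ̄, ψσ, ψσ²) is a smooth solution of the IL^(0,1)QG equations on ℝ × [0,W] × ℝ, with all three fields L-periodic in x and the no-normal-flow boundary condition satisfied. Then for every continuously differentiable F : ℝ → ℝ, the functional t ↦ ∫₀ᵂ ∫₀ᴸ ξ̄(x,y,t) · F( ψσ(x,y,t) − (2/3) ψσ²(x,y,t) ) dx dy is constant in time. (These integrals of motion are neither Casimirs of the model's Lie–Poisson bracket nor related to explicit symmetries.) -/

import Mathlib

/-- Partial derivative in `x` of a field of `(x, y, t)`. -/
noncomputable def px (f : ℝ → ℝ → ℝ → ℝ) (x y t : ℝ) : ℝ := deriv (fun x' => f x' y t) x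

/-- Partial derivative in `y` of a field of `(x, y, t)`. -/
noncomputable def py (f : ℝ → ℝ → ℝ → ℝ) (x y t : ℝ) : ℝ := deriv (fun y' => f x y' t) y

/-- Partial derivative in `t` of a field of `(x, y, t)`. -/
noncomputable def pt (f : ℝ → ℝ → ℝ → ℝ) (x y t : ℝ) : ℝ := deriv (fun t' => f x y t') t

/-- Second partial derivative in `x`. -/
noncomputable def pxx (f : ℝ → ℝ → ℝ → ℝ) (x y t : ℝ) : ℝ := deriv (fun x' => px f x' y t) x

/-- Second partial derivative in `y`. -/
noncomputable def pyy (f : ℝ → ℝ → ℝ → ℝ) (x y t : ℝ) : ℝ := deriv (fun y' => py f x y' t) y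

/-- Jacobian bracket `{a,b} = ∂ₓa ∂_yb − ∂_ya ∂ₓb` of two fields of `(x, y, t)`. -/
noncomputable def jac (a b : ℝ → ℝ → ℝ → ℝ) (x y t : ℝ) : ℝ :=
  px a x y t * py b x y t - py a x y t * px b x y t

/-- Potential vorticity `ξ̄ = ∇²ψ̄ − R_S⁻²(ψ̄ − ψσ + (2/3)ψσ²) + βy`. -/
noncomputable def xibar (RS β : ℝ) (ψb ψσ ψσ2 : ℝ → ℝ → ℝ → ℝ) (x y t : ℝ) : ℝ :=
  pxx ψb x y t + pyy ψb x y t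
    - (RS ^ 2)⁻¹ * (ψb x y t - ψσ x y t + 2 / 3 * ψσ2 x y t) + β * y

/-- A field of `(x, y, t)` is smooth (infinitely differentiable as a function on `ℝ³`). -/
def Smooth3 (f : ℝ → ℝ → ℝ → ℝ) : Prop :=
  ContDiff ℝ (⊤ : ℕ∞) (fun z : ℝ × ℝ × ℝ => f z.1 z.2.1 z.2.2)

/-- `L`-periodicity in the zonal direction `x`. -/
def PeriodicX (L : ℝ) (f : ℝ → ℝ → ℝ → ℝ) : Prop :=
  ∀ x y t : ℝ, f (x + L) y t = f x y t

/-- The IL⁽⁰'¹⁾QG equations on the channel `ℝ × [0,W] × ℝ`: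
`∂ₜξ̄ + {ψ̄, ξ̄ − R_S⁻²(ψσ − (2/3)ψσ²)} = 0`, `∂ₜψσ + {ψ̄, ψσ} = 0`,
`∂ₜψσ² + {ψ̄, ψσ²} = 0`. -/
def IL01QG (RS β W : ℝ) (ψb ψσ ψσ2 : ℝ → ℝ → ℝ → ℝ) : Prop :=
  ∀ x t : ℝ, ∀ y ∈ Set.Icc (0:ℝ) W,
    pt (xibar RS β ψb ψσ ψσ2) x y t
      + jac ψb (fun x' y' t' => xibar RS β ψb ψσ ψσ2 x' y' t'
          - (RS ^ 2)⁻¹ * (ψσ x' y' t' - 2 / 3 * ψσ2 x' y' t')) x y t = 0 ∧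
    pt ψσ x y t + jac ψb ψσ x y t = 0 ∧
    pt ψσ2 x y t + jac ψb ψσ2 x y t = 0

/-- No-normal-flow boundary condition: `∂ₓψ̄ = 0` on both channel walls. -/
def NoNormalFlow (W : ℝ) (ψb : ℝ → ℝ → ℝ → ℝ) : Prop :=
  ∀ x t : ℝ, px ψb x 0 t = 0 ∧ px ψb x W t = 0

/-!
Write `q = ψσ − (2/3)ψσ²` and let `G` be a primitive of `F`. The last two equations say that `q`
is advected, `∂ₜq + {ψ̄, q} = 0`, and the first one reads `∂ₜξ̄ + {ψ̄, ξ̄} = R_S⁻²{ψ̄, q}`. Since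
`∂ₜ + {ψ̄, ·}` is a derivation, `∂ₜ(ξ̄ F(q)) = −{ψ̄, H}` with `H = ξ̄ F(q) − R_S⁻² G(q)`.
A Jacobian is a divergence, `{ψ̄, H} = ∂_y(H ∂ₓψ̄) − ∂ₓ(H ∂_yψ̄)`, so its integral over the channel
vanishes: the `x`-flux by periodicity, the `y`-flux because `∂ₓψ̄ = 0` on the walls.
Differentiating under the integral sign, the functional has zero time derivative.
-/

open Set Function intervalIntegral

namespace ILQG

-- `Smooth3 f` is definitionally `ContDiff ℝ ⊤ (uncurry3 f)`.
def uncurry3 (f : ℝ → ℝ → ℝ → ℝ) : ℝ × ℝ × ℝ → ℝ := fun z => f z.1 z.2.1 z.2.2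

section PartialDerivatives

variable {f : ℝ → ℝ → ℝ → ℝ} {x y t : ℝ}

lemma px_eq_fderiv (hf : DifferentiableAt ℝ (uncurry3 f) (x, y, t)) :
    px f x y t = fderiv ℝ (uncurry3 f) (x, y, t) (1, 0, 0) :=
  ((hf.hasFDerivAt.comp_hasDerivAt x ((hasDerivAt_id x).prodMk
    ((hasDerivAt_const x y).prodMk (hasDerivAt_const x t)))).deriv :)

lemma py_eq_fderiv (hf : DifferentiableAt ℝ (uncurry3 f) (x, y, t)) :
    py f x y t = fderiv ℝ (uncurry3 f) (x, y, t) (0, 1, 0) :=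
  ((hf.hasFDerivAt.comp_hasDerivAt y ((hasDerivAt_const y x).prodMk
    ((hasDerivAt_id y).prodMk (hasDerivAt_const y t)))).deriv :)

lemma hasDerivAt_px (hf : DifferentiableAt ℝ (uncurry3 f) (x, y, t)) :
    HasDerivAt (f · y t) (px f x y t) x :=
  ((hf.comp x (by fun_prop : DifferentiableAt ℝ (fun s : ℝ => (s, y, t)) x)).hasDerivAt :)

lemma hasDerivAt_py (hf : DifferentiableAt ℝ (uncurry3 f) (x, y, t)) :
    HasDerivAt (f x · t) (py f x y t) y :=
  ((hf.comp y (by fun_prop : DifferentiableAt ℝ (fun s : ℝ => (x, s, t)) y)).hasDerivAt :)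

lemma hasDerivAt_pt (hf : DifferentiableAt ℝ (uncurry3 f) (x, y, t)) :
    HasDerivAt (f x y ·) (pt f x y t) t :=
  ((hf.comp t (by fun_prop : DifferentiableAt ℝ (fun s : ℝ => (x, y, s)) t)).hasDerivAt :)

lemma contDiff_px {m n : WithTop ℕ∞} (hf : ContDiff ℝ n (uncurry3 f)) (hmn : m + 1 ≤ n) :
    ContDiff ℝ m (uncurry3 (px f)) := by
  have hd : Differentiable ℝ (uncurry3 f) := hf.differentiable (by
    rintro rfl; simp at hmn)
  have : uncurry3 (px f) = fun z => fderiv ℝ (uncurry3 f) z (1, 0, 0) :=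
    funext fun z => px_eq_fderiv (hd z)
  rw [this]
  exact (hf.fderiv_right hmn).clm_apply contDiff_const

lemma contDiff_py {m n : WithTop ℕ∞} (hf : ContDiff ℝ n (uncurry3 f)) (hmn : m + 1 ≤ n) :
    ContDiff ℝ m (uncurry3 (py f)) := by
  have hd : Differentiable ℝ (uncurry3 f) := hf.differentiable (by
    rintro rfl; simp at hmn)
  have : uncurry3 (py f) = fun z => fderiv ℝ (uncurry3 f) z (0, 1, 0) :=
    funext fun z => py_eq_fderiv (hd z)
  rw [this]
  exact (hf.fderiv_right hmn).clm_apply contDiff_const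

lemma _root_.Smooth3.px (hf : Smooth3 f) : Smooth3 (px f) :=
  contDiff_px hf le_rfl

lemma _root_.Smooth3.py (hf : Smooth3 f) : Smooth3 (py f) :=
  contDiff_py hf le_rfl

lemma _root_.Smooth3.contDiff (hf : Smooth3 f) {n : ℕ∞} : ContDiff ℝ n (uncurry3 f) :=
  ContDiff.of_le hf (WithTop.coe_le_coe.mpr le_top)

lemma continuous_px (hf : ContDiff ℝ 1 (uncurry3 f)) : Continuous (uncurry3 (px f)) :=
  (contDiff_px (m := 0) hf (by norm_num)).continuous

lemma continuous_py (hf : ContDiff ℝ 1 (uncurry3 f)) : Continuous (uncurry3 (py f)) :=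
  (contDiff_py (m := 0) hf (by norm_num)).continuous

lemma px_py_comm (hf : ContDiff ℝ 2 (uncurry3 f)) (x y t : ℝ) :
    px (py f) x y t = py (px f) x y t := by
  set g := uncurry3 f
  have hg : Differentiable ℝ g := hf.differentiable (by norm_num)
  have hg' : Differentiable ℝ (fderiv ℝ g) :=
    (hf.fderiv_right (m := 1) le_rfl).differentiable (by norm_num)
  have hpartial (v w : ℝ × ℝ × ℝ) :
      fderiv ℝ (fun z => fderiv ℝ g z v) (x, y, t) w = fderiv ℝ (fderiv ℝ g) (x, y, t) w v := by
    rw [fderiv_clm_apply (hg' _) (differentiableAt_const v)]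
    simp
  have hpy : uncurry3 (py f) = fun z => fderiv ℝ g z (0, 1, 0) :=
    funext fun z => py_eq_fderiv (hg z)
  have hpx : uncurry3 (px f) = fun z => fderiv ℝ g z (1, 0, 0) :=
    funext fun z => px_eq_fderiv (hg z)
  rw [px_eq_fderiv ((contDiff_py (m := 1) hf le_rfl).differentiable (by norm_num) _),
    py_eq_fderiv ((contDiff_px (m := 1) hf le_rfl).differentiable (by norm_num) _), hpy, hpx,
    hpartial, hpartial]
  exact (hf.contDiffAt.isSymmSndFDerivAt (by simp)).eq _ _

lemma jac_eq_py_sub_px {ψ H : ℝ → ℝ → ℝ → ℝ} (hψ : ContDiff ℝ 2 (uncurry3 ψ))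
    (hH : Differentiable ℝ (uncurry3 H)) (x y t : ℝ) :
    jac ψ H x y t = py (fun x y t => H x y t * px ψ x y t) x y t
      - px (fun x y t => H x y t * py ψ x y t) x y t := by
  have hx := (hasDerivAt_px (hH (x, y, t))).mul
    (hasDerivAt_px ((contDiff_py (m := 1) hψ le_rfl).differentiable (by norm_num) (x, y, t)))
  have hy := (hasDerivAt_py (hH (x, y, t))).mul
    (hasDerivAt_py ((contDiff_px (m := 1) hψ le_rfl).differentiable (by norm_num) (x, y, t)))
  rw [jac, show py (fun x y t => H x y t * px ψ x y t) x y t = _ from hy.deriv,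
    show px (fun x y t => H x y t * py ψ x y t) x y t = _ from hx.deriv, px_py_comm hψ]
  ring

lemma continuous_jac {ψ H : ℝ → ℝ → ℝ → ℝ} (hψ : ContDiff ℝ 1 (uncurry3 ψ))
    (hH : ContDiff ℝ 1 (uncurry3 H)) : Continuous (uncurry3 (jac ψ H)) :=
  ((continuous_px hψ).mul (continuous_py hH)).sub ((continuous_py hψ).mul (continuous_px hH))

end PartialDerivatives

section Periodicity

variable {L : ℝ} {f : ℝ → ℝ → ℝ → ℝ}

lemma _root_.PeriodicX.px (hf : PeriodicX L f) : PeriodicX L (px f) := by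
  intro x y t
  show deriv (f · y t) (x + L) = deriv (f · y t) x
  rw [← deriv_comp_add_const]
  exact congrArg (deriv · x) (funext fun x' => hf x' y t)

lemma _root_.PeriodicX.py (hf : PeriodicX L f) : PeriodicX L (py f) := by
  intro x y t
  show deriv (f (x + L) · t) y = deriv (f x · t) y
  exact congrArg (deriv · y) (funext fun y' => hf x y' t)

end Periodicity

section Integrals

lemma intervalIntegral_swap_of_continuous {f : ℝ → ℝ → ℝ} (hf : Continuous (uncurry f))
    (a b c d : ℝ) :
    ∫ x in a..b, ∫ y in c..d, f x y = ∫ y in c..d, ∫ x in a..b, f x y :=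
  MeasureTheory.intervalIntegral_intervalIntegral_swap
    ((hf.continuousOn.integrableOn_compact (isCompact_uIcc.prod isCompact_uIcc)).mono_set
      (prod_mono uIoc_subset_uIcc uIoc_subset_uIcc))

theorem hasDerivAt_intervalIntegral_of_continuous {f f' : ℝ → ℝ → ℝ} {a b : ℝ}
    (hf : Continuous (uncurry f)) (hf' : Continuous (uncurry f'))
    (hderiv : ∀ x ∈ uIcc a b, ∀ s, HasDerivAt (f x) (f' x s) s) (t : ℝ) :
    HasDerivAt (fun s => ∫ x in a..b, f x s) (∫ x in a..b, f' x t) t := by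
  have hF' : Continuous fun s => ∫ x in a..b, f' x s :=
    continuous_parametric_intervalIntegral_of_continuous' (f := fun s x => f' x s)
      (hf'.comp continuous_swap) a b
  have hprimitive (s : ℝ) :
      ∫ x in a..b, f x s = (∫ x in a..b, f x t) + ∫ τ in t..s, ∫ x in a..b, f' x τ := by
    rw [← intervalIntegral_swap_of_continuous hf',
      ← integral_add ((hf.uncurry_right t).intervalIntegrable a b)
        ((continuous_parametric_intervalIntegral_of_continuous' hf' t s).intervalIntegrable a b)]
    refine integral_congr fun x hx => ?_
    rw [integral_eq_sub_of_hasDerivAt (fun τ _ => hderiv x hx τ)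
      ((hf'.uncurry_left x).intervalIntegrable t s)]
    ring
  rw [funext hprimitive]
  exact ((hF'.integral_hasStrictDerivAt t t).hasDerivAt).const_add _

variable {f : ℝ → ℝ → ℝ → ℝ}

lemma _root_.Continuous.apply₃ {X : Type*} [TopologicalSpace X] (hf : Continuous (uncurry3 f))
    {a b c : X → ℝ} (ha : Continuous a) (hb : Continuous b) (hc : Continuous c) :
    Continuous fun p => f (a p) (b p) (c p) :=
  hf.comp (ha.prodMk (hb.prodMk hc))

lemma integral_px_eq_zero_of_periodicX {L : ℝ} (hf : ContDiff ℝ 1 (uncurry3 f))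
    (hper : PeriodicX L f) (y t : ℝ) : ∫ x in (0 : ℝ)..L, px f x y t = 0 := by
  rw [integral_eq_sub_of_hasDerivAt
    (fun x _ => hasDerivAt_px (hf.differentiable one_ne_zero (x, y, t)))
    (((continuous_px hf).apply₃ continuous_id' continuous_const continuous_const).intervalIntegrable
      0 L)]
  simpa [sub_eq_zero] using hper 0 y t

lemma integral_py_eq_zero_of_eq_zero {W : ℝ} (hf : ContDiff ℝ 1 (uncurry3 f))
    (h0 : ∀ x t, f x 0 t = 0) (hW : ∀ x t, f x W t = 0) (x t : ℝ) :
    ∫ y in (0 : ℝ)..W, py f x y t = 0 := by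
  rw [integral_eq_sub_of_hasDerivAt
    (fun y _ => hasDerivAt_py (hf.differentiable one_ne_zero (x, y, t)))
    (((continuous_py hf).apply₃ continuous_const continuous_id' continuous_const).intervalIntegrable
      0 W), h0, hW, sub_zero]

end Integrals

section Conservation

variable {L W : ℝ} {ψ H : ℝ → ℝ → ℝ → ℝ}

lemma integral_integral_jac_eq_zero (hψ : ContDiff ℝ 2 (uncurry3 ψ))
    (hH : ContDiff ℝ 1 (uncurry3 H)) (hψper : PeriodicX L ψ) (hHper : PeriodicX L H)
    (hbc : NoNormalFlow W ψ) (t : ℝ) :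
    ∫ y in (0 : ℝ)..W, ∫ x in (0 : ℝ)..L, jac ψ H x y t = 0 := by
  set A : ℝ → ℝ → ℝ → ℝ := fun x y t => H x y t * py ψ x y t
  set B : ℝ → ℝ → ℝ → ℝ := fun x y t => H x y t * px ψ x y t
  have hA : ContDiff ℝ 1 (uncurry3 A) := hH.mul (contDiff_py hψ le_rfl)
  have hB : ContDiff ℝ 1 (uncurry3 B) := hH.mul (contDiff_px hψ le_rfl)
  have hAper : PeriodicX L A := fun x y t => by simp only [A, hHper x y t, hψper.py x y t]
  have hjac (x y : ℝ) : jac ψ H x y t = py B x y t - px A x y t :=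
    jac_eq_py_sub_px hψ (hH.differentiable one_ne_zero) x y t
  have hcontA := continuous_px hA
  have hcontB := continuous_py hB
  calc ∫ y in (0 : ℝ)..W, ∫ x in (0 : ℝ)..L, jac ψ H x y t
      = ∫ y in (0 : ℝ)..W, ∫ x in (0 : ℝ)..L, py B x y t := by
        refine integral_congr fun y _ => ?_
        simp only [hjac]
        rw [integral_sub
          ((hcontB.apply₃ continuous_id' continuous_const continuous_const).intervalIntegrable 0 L)
          ((hcontA.apply₃ continuous_id' continuous_const continuous_const).intervalIntegrable 0 L),
          integral_px_eq_zero_of_periodicX hA hAper, sub_zero]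
    _ = ∫ x in (0 : ℝ)..L, ∫ y in (0 : ℝ)..W, py B x y t :=
        intervalIntegral_swap_of_continuous
          (f := fun y x => py B x y t)
          (hcontB.apply₃ continuous_snd continuous_fst continuous_const) 0 W 0 L
    _ = 0 := by
        have hB0 (x t : ℝ) : B x 0 t = 0 := by simp only [B, (hbc x t).1, mul_zero]
        have hBW (x t : ℝ) : B x W t = 0 := by simp only [B, (hbc x t).2, mul_zero]
        simp only [integral_py_eq_zero_of_eq_zero hB hB0 hBW, integral_zero]

theorem integral_integral_eq_of_hasDerivAt_neg_jac (hW : 0 ≤ W) {Φ : ℝ → ℝ → ℝ → ℝ}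
    (hΦ : Continuous (uncurry3 Φ)) (hψ : ContDiff ℝ 2 (uncurry3 ψ))
    (hH : ContDiff ℝ 1 (uncurry3 H)) (hψper : PeriodicX L ψ) (hHper : PeriodicX L H)
    (hbc : NoNormalFlow W ψ)
    (hΦt : ∀ x t, ∀ y ∈ Icc 0 W, HasDerivAt (Φ x y ·) (-jac ψ H x y t) t) (t₁ t₂ : ℝ) :
    ∫ y in (0 : ℝ)..W, ∫ x in (0 : ℝ)..L, Φ x y t₁
      = ∫ y in (0 : ℝ)..W, ∫ x in (0 : ℝ)..L, Φ x y t₂ := by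
  have hjac : Continuous (uncurry3 fun x y t => -jac ψ H x y t) :=
    (continuous_jac (hψ.of_le one_le_two) hH).neg
  have hinner (y : ℝ) (hy : y ∈ uIcc 0 W) (t : ℝ) :
      HasDerivAt (fun s => ∫ x in (0 : ℝ)..L, Φ x y s) (∫ x in (0 : ℝ)..L, -jac ψ H x y t) t :=
    hasDerivAt_intervalIntegral_of_continuous (f := fun x s => Φ x y s)
      (f' := fun x s => -jac ψ H x y s) (hΦ.apply₃ continuous_fst continuous_const continuous_snd)
      (hjac.apply₃ continuous_fst continuous_const continuous_snd)
      (fun x _ s => hΦt x s y (uIcc_of_le hW ▸ hy)) t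
  have houter (t : ℝ) :
      HasDerivAt (fun s => ∫ y in (0 : ℝ)..W, ∫ x in (0 : ℝ)..L, Φ x y s)
        (∫ y in (0 : ℝ)..W, ∫ x in (0 : ℝ)..L, -jac ψ H x y t) t :=
    hasDerivAt_intervalIntegral_of_continuous (f := fun y s => ∫ x in (0 : ℝ)..L, Φ x y s)
      (f' := fun y s => ∫ x in (0 : ℝ)..L, -jac ψ H x y s)
      (continuous_parametric_intervalIntegral_of_continuous'
        (f := fun (p : ℝ × ℝ) x => Φ x p.1 p.2)
        (hΦ.apply₃ continuous_snd continuous_fst.fst continuous_fst.snd) 0 L)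
      (continuous_parametric_intervalIntegral_of_continuous'
        (f := fun (p : ℝ × ℝ) x => -jac ψ H x p.1 p.2)
        (hjac.apply₃ continuous_snd continuous_fst.fst continuous_fst.snd) 0 L)
      hinner t
  have hzero (t : ℝ) : ∫ y in (0 : ℝ)..W, ∫ x in (0 : ℝ)..L, -jac ψ H x y t = 0 := by
    simp only [integral_neg,
      integral_integral_jac_eq_zero hψ hH hψper hHper hbc, neg_zero]
  exact is_const_of_deriv_eq_zero (fun t => (houter t).differentiableAt)
    (fun t => (houter t).deriv.trans (hzero t)) t₁ t₂

end Conservation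

section Advection

variable {ψ : ℝ → ℝ → ℝ → ℝ} {c x y t : ℝ}

lemma pt_add_jac_sub_const_mul {a b : ℝ → ℝ → ℝ → ℝ}
    (ha : DifferentiableAt ℝ (uncurry3 a) (x, y, t))
    (hb : DifferentiableAt ℝ (uncurry3 b) (x, y, t)) :
    pt (fun x y t => a x y t - c * b x y t) x y t
        + jac ψ (fun x y t => a x y t - c * b x y t) x y t
      = pt a x y t + jac ψ a x y t - c * (pt b x y t + jac ψ b x y t) := by
  rw [jac, jac, jac,
    show px (fun x y t => a x y t - c * b x y t) x y t = _ from
      ((hasDerivAt_px ha).sub ((hasDerivAt_px hb).const_mul c)).deriv,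
    show py (fun x y t => a x y t - c * b x y t) x y t = _ from
      ((hasDerivAt_py ha).sub ((hasDerivAt_py hb).const_mul c)).deriv,
    show pt (fun x y t => a x y t - c * b x y t) x y t = _ from
      ((hasDerivAt_pt ha).sub ((hasDerivAt_pt hb).const_mul c)).deriv]
  ring

theorem hasDerivAt_mul_comp_of_advection {ξ q : ℝ → ℝ → ℝ → ℝ} {F G : ℝ → ℝ} {F' : ℝ}
    (hξ : DifferentiableAt ℝ (uncurry3 ξ) (x, y, t))
    (hq : DifferentiableAt ℝ (uncurry3 q) (x, y, t))
    (hF : HasDerivAt F F' (q x y t)) (hG : HasDerivAt G (F (q x y t)) (q x y t))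
    (hξeq : pt ξ x y t + jac ψ (fun x y t => ξ x y t - c * q x y t) x y t = 0)
    (hqeq : pt q x y t + jac ψ q x y t = 0) :
    HasDerivAt (fun s => ξ x y s * F (q x y s))
      (-jac ψ (fun x y t => ξ x y t * F (q x y t) - c * G (q x y t)) x y t) t := by
  have hpx := (hasDerivAt_px hξ).mul (hF.comp x (hasDerivAt_px hq))
    |>.sub ((hG.comp x (hasDerivAt_px hq)).const_mul c)
  have hpy := (hasDerivAt_py hξ).mul (hF.comp y (hasDerivAt_py hq))
    |>.sub ((hG.comp y (hasDerivAt_py hq)).const_mul c)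
  have hdx := (hasDerivAt_px hξ).sub ((hasDerivAt_px hq).const_mul c)
  have hdy := (hasDerivAt_py hξ).sub ((hasDerivAt_py hq).const_mul c)
  refine ((hasDerivAt_pt hξ).mul (hF.comp t (hasDerivAt_pt hq))).congr_deriv ?_
  rw [jac, show px (fun x y t => ξ x y t - c * q x y t) x y t = _ from hdx.deriv,
    show py (fun x y t => ξ x y t - c * q x y t) x y t = _ from hdy.deriv] at hξeq
  rw [jac] at hqeq
  rw [jac,
    show px (fun x y t => ξ x y t * F (q x y t) - c * G (q x y t)) x y t = _ from hpx.deriv,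
    show py (fun x y t => ξ x y t * F (q x y t) - c * G (q x y t)) x y t = _ from hpy.deriv]
  simp only [Function.comp_apply]
  linear_combination F (q x y t) * hξeq + ξ x y t * F' * hqeq

end Advection

lemma contDiff_one_primitive {F : ℝ → ℝ} (hF : Continuous F) :
    ContDiff ℝ 1 fun s => ∫ u in (0 : ℝ)..s, F u := by
  have hG (s : ℝ) : HasDerivAt (fun s => ∫ u in (0 : ℝ)..s, F u) (F s) s :=
    (hF.integral_hasStrictDerivAt 0 s).hasDerivAt
  exact contDiff_one_iff_deriv.mpr
    ⟨fun s => (hG s).differentiableAt, by rw [funext fun s => (hG s).deriv]; exact hF⟩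

lemma smooth3_xibar (RS β : ℝ) {ψb ψσ ψσ2 : ℝ → ℝ → ℝ → ℝ} (hψb : Smooth3 ψb)
    (hψσ : Smooth3 ψσ) (hψσ2 : Smooth3 ψσ2) : Smooth3 (xibar RS β ψb ψσ ψσ2) :=
  (((hψb.px.px.add hψb.py.py).sub (contDiff_const.mul ((ContDiff.sub hψb hψσ).add
    (contDiff_const.mul hψσ2)))).add (contDiff_const.mul contDiff_snd.fst) :)

lemma periodicX_xibar {L : ℝ} (RS β : ℝ) {ψb ψσ ψσ2 : ℝ → ℝ → ℝ → ℝ}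
    (hψb : PeriodicX L ψb) (hψσ : PeriodicX L ψσ) (hψσ2 : PeriodicX L ψσ2) :
    PeriodicX L (xibar RS β ψb ψσ ψσ2) := by
  intro x y t
  show px (px ψb) (x + L) y t + py (py ψb) (x + L) y t
      - (RS ^ 2)⁻¹ * (ψb (x + L) y t - ψσ (x + L) y t + 2 / 3 * ψσ2 (x + L) y t) + β * y
    = px (px ψb) x y t + py (py ψb) x y t
      - (RS ^ 2)⁻¹ * (ψb x y t - ψσ x y t + 2 / 3 * ψσ2 x y t) + β * y
  rw [hψb.px.px, hψb.py.py, hψb, hψσ, hψσ2]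

end ILQG

open ILQG in
theorem nonCasimir_integral_conserved_general
    (L W β RS : ℝ) (hW : 0 < W)
    (ψb ψσ ψσ2 : ℝ → ℝ → ℝ → ℝ)
    (hψb : Smooth3 ψb) (hψσ : Smooth3 ψσ) (hψσ2 : Smooth3 ψσ2)
    (hperb : PeriodicX L ψb) (hperσ : PeriodicX L ψσ) (hperσ2 : PeriodicX L ψσ2)
    (heqs : IL01QG RS β W ψb ψσ ψσ2)
    (hbc : NoNormalFlow W ψb)
    (F : ℝ → ℝ) (hF : ContDiff ℝ 1 F) :
    ∀ t₁ t₂ : ℝ,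
      (∫ y in (0:ℝ)..W, ∫ x in (0:ℝ)..L,
        xibar RS β ψb ψσ ψσ2 x y t₁ * F (ψσ x y t₁ - 2 / 3 * ψσ2 x y t₁))
      = ∫ y in (0:ℝ)..W, ∫ x in (0:ℝ)..L,
        xibar RS β ψb ψσ ψσ2 x y t₂ * F (ψσ x y t₂ - 2 / 3 * ψσ2 x y t₂) := by
  set ξ := xibar RS β ψb ψσ ψσ2
  set q : ℝ → ℝ → ℝ → ℝ := fun x y t => ψσ x y t - 2 / 3 * ψσ2 x y t
  set G : ℝ → ℝ := fun s => ∫ u in (0 : ℝ)..s, F u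
  have hG (s : ℝ) : HasDerivAt G (F s) s :=
    (hF.continuous.integral_hasStrictDerivAt 0 s).hasDerivAt
  have hξ : Smooth3 ξ := smooth3_xibar RS β hψb hψσ hψσ2
  have hq : ContDiff ℝ 1 (uncurry3 q) := hψσ.contDiff.sub (contDiff_const.mul hψσ2.contDiff)
  have hξper : PeriodicX L ξ := periodicX_xibar RS β hperb hperσ hperσ2
  set H : ℝ → ℝ → ℝ → ℝ := fun x y t => ξ x y t * F (q x y t) - (RS ^ 2)⁻¹ * G (q x y t)
  have hH : ContDiff ℝ 1 (uncurry3 H) :=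
    (hξ.contDiff.mul (hF.comp hq)).sub
      (contDiff_const.mul ((contDiff_one_primitive hF.continuous).comp hq))
  have hHper : PeriodicX L H := fun x y t => by
    simp only [H, q, hξper x y t, hperσ x y t, hperσ2 x y t]
  refine integral_integral_eq_of_hasDerivAt_neg_jac hW.le (H := H)
    (hξ.contDiff.mul (hF.comp hq)).continuous hψb.contDiff hH hperb hHper hbc
    fun x t y hy => ?_
  obtain ⟨hξeq, hσ, hσ2⟩ := heqs x t y hy
  have hqeq : pt q x y t + jac ψb q x y t = 0 := by
    rw [pt_add_jac_sub_const_mul (hψσ.contDiff (n := 1).differentiable one_ne_zero _)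
      (hψσ2.contDiff (n := 1).differentiable one_ne_zero _), hσ, hσ2, mul_zero, sub_zero]
  exact hasDerivAt_mul_comp_of_advection (hξ.contDiff (n := 1).differentiable one_ne_zero _)
    (hq.differentiable one_ne_zero _) (hF.differentiable one_ne_zero _).hasDerivAt (hG _)
    hξeq hqeq

/-- Lemma 1 of the paper: the non-Casimir integrals of motion
`∫∫ ξ̄ F(ψσ − (2/3)ψσ²)` are conserved, for every `C¹` function `F : ℝ → ℝ`,
along smooth `x`-periodic solutions of the IL⁽⁰'¹⁾QG equations satisfying the
no-normal-flow boundary condition. -/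
theorem nonCasimir_integral_conserved
    (L W β RS : ℝ) (hL : 0 < L) (hW : 0 < W) (hRS : 0 < RS)
    (ψb ψσ ψσ2 : ℝ → ℝ → ℝ → ℝ)
    (hψb : Smooth3 ψb) (hψσ : Smooth3 ψσ) (hψσ2 : Smooth3 ψσ2)
    (hperb : PeriodicX L ψb) (hperσ : PeriodicX L ψσ) (hperσ2 : PeriodicX L ψσ2)
    (heqs : IL01QG RS β W ψb ψσ ψσ2)
    (hbc : NoNormalFlow W ψb)
    (F : ℝ → ℝ) (hF : ContDiff ℝ 1 F) :
    ∀ t₁ t₂ : ℝ,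
      (∫ y in (0:ℝ)..W, ∫ x in (0:ℝ)..L,
        xibar RS β ψb ψσ ψσ2 x y t₁ * F (ψσ x y t₁ - 2 / 3 * ψσ2 x y t₁))
      = ∫ y in (0:ℝ)..W, ∫ x in (0:ℝ)..L,
        xibar RS β ψb ψσ ψσ2 x y t₂ * F (ψσ x y t₂ - 2 / 3 * ψσ2 x y t₂) :=
  nonCasimir_integral_conserved_general L W β RS hW ψb ψσ ψσ2 hψb hψσ hψσ2 hperb hperσ hperσ2 heqs
    hbc F hF
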